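/- Hessian-dominated ensemble consistency bound: let G_j : ℝ^{d_u} → ℝ be twice continuously differentiable and suppose there is a matrix Q^j ∈ ℝ^{d_u × d_u} with |[Hess G_j(u)]_{m,n}| ≤ Q^j_{m,n} for all u ∈ ℝ^{d_u} and all m, n, and that Σ_{m,n=1}^{d_u} |Q^j_{m,n}| ≤ L_G. Let u^1, …, u^J ∈ ℝ^{d_u} be an ensemble with mean ū, Ḡ_j = (1/J)Σ_{i=1}^J G_j(u^i), and C^{uu} = (1/(J−1))Σ_{i=1}^J (u^i − ū)(u^i − ū)ᵀ. Then |Ḡ_j − G_j(ū)| ≤ ((J−1)/(2J)) L_G ‖C^{uu}‖_max ≤ (1/2) L_G ‖C^{uu}‖_max. -/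

import Mathlib

/-!
The deviations `u i - ubar` sum to zero, so the linear Taylor terms of `Gj` at `ubar` cancel in
the ensemble average and `Gbar - Gj ubar` is the average of the first-order Taylor remainders.
Along the segment from `ubar` to `u i` the Hessian is dominated by `Q`, so each remainder is at
most `½ ∑ Q m n |xᵢ m| |xᵢ n|` with `xᵢ = u i - ubar`. By AM–GM, `∑ᵢ |xᵢ m| |xᵢ n|` is at most
`(J - 1) * maxDiag Cuu`, which yields the factor `(J - 1) / (2 J)`.
-/

open Matrix

/-- The maximal diagonal entry of a matrix; for a positive semidefinite matrix this equals
`‖C‖_max = max_{i,j}|C_{i,j}|`. -/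
noncomputable def maxDiag {n : ℕ} (A : Matrix (Fin n) (Fin n) ℝ) : ℝ := ⨆ i, A i i

open Finset Set

lemma abs_sub_sub_mul_deriv_le_of_abs_deriv2_le {g g' g'' : ℝ → ℝ} {a b M : ℝ} (hab : a ≤ b)
    (hg : ∀ t ∈ Icc a b, HasDerivAt g (g' t) t)
    (hg' : ∀ t ∈ Icc a b, HasDerivAt g' (g'' t) t)
    (hM : ∀ t ∈ Icc a b, |g'' t| ≤ M) :
    |g b - g a - (b - a) * g' a| ≤ M * (b - a) ^ 2 / 2 := by
  have slope_le : ∀ t ∈ Icc a b, ‖g' t - g' a‖ ≤ M * (t - a) := fun t ht => by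
    simpa [abs_of_nonneg (sub_nonneg.2 ht.1)] using
      (convex_Icc a b).norm_image_sub_le_of_norm_hasDerivWithin_le
        (fun x hx => (hg' x hx).hasDerivWithinAt) hM (left_mem_Icc.2 hab) ht
  have remainder_le := image_norm_le_of_norm_deriv_right_le_deriv_boundary
    (f := fun t => g t - g a - (t - a) * g' a) (f' := fun t => g' t - g' a)
    (B := fun t => M * (t - a) ^ 2 / 2) (B' := fun t => M * (t - a))
    (fun t ht => ((hg t ht).continuousAt.sub continuousAt_const).sub
      ((continuousAt_id.sub continuousAt_const).mul continuousAt_const) |>.continuousWithinAt)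
    (fun t ht => ?_) (by simp) (fun t => ?_) (fun t ht => slope_le t (Ico_subset_Icc_self ht))
    (right_mem_Icc.2 hab)
  · simpa using remainder_le
  · have ht' := Ico_subset_Icc_self ht
    exact (((hg t ht').sub_const (g a)).sub
      (((hasDerivAt_id t).sub_const a).mul_const (g' a))).hasDerivWithinAt.congr_deriv (by simp)
  · exact (((hasDerivAt_id t).sub_const a).pow 2 |>.const_mul M |>.div_const 2).congr_deriv
      (by simp; ring)

lemma abs_apply_apply_le_sum_mul_abs {ι : Type*} [Fintype ι] [DecidableEq ι]
    (B : (ι → ℝ) →L[ℝ] (ι → ℝ) →L[ℝ] ℝ) {Q : Matrix ι ι ℝ}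
    (hB : ∀ m n, |B (Pi.single m 1) (Pi.single n 1)| ≤ Q m n) (x y : ι → ℝ) :
    |B x y| ≤ ∑ m, ∑ n, Q m n * (|x m| * |y n|) := by
  have expand : B x y = ∑ m, ∑ n, x m * y n * B (Pi.single m 1) (Pi.single n 1) := by
    conv_lhs => rw [pi_eq_sum_univ' x, pi_eq_sum_univ' y]
    simp only [map_sum, map_smul, _root_.sum_apply, _root_.smul_apply, smul_eq_mul, mul_sum]
    rw [sum_comm]
    exact sum_congr rfl fun _ _ => sum_congr rfl fun _ _ => by ring
  rw [expand]
  refine (abs_sum_le_sum_abs _ _).trans <| sum_le_sum fun m _ =>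
    (abs_sum_le_sum_abs _ _).trans <| sum_le_sum fun n _ => ?_
  rw [abs_mul, abs_mul, mul_comm]
  gcongr
  exact hB m n

lemma fderiv_fun_fderiv_apply {E F : Type*} [NormedAddCommGroup E] [NormedSpace ℝ E]
    [NormedAddCommGroup F] [NormedSpace ℝ F] {f : E → F} {x : E}
    (hf : DifferentiableAt ℝ (fderiv ℝ f) x) (y z : E) :
    fderiv ℝ (fun w => fderiv ℝ f w y) x z = fderiv ℝ (fderiv ℝ f) x z y := by
  simp [fderiv_clm_apply hf (differentiableAt_const y)]

lemma abs_sub_sub_fderiv_le_of_abs_fderiv2_le {ι : Type*} [Fintype ι] [DecidableEq ι]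
    {f : (ι → ℝ) → ℝ} (hf : ContDiff ℝ 2 f) {Q : Matrix ι ι ℝ}
    (hQ : ∀ v m n, |fderiv ℝ (fderiv ℝ f) v (Pi.single m 1) (Pi.single n 1)| ≤ Q m n)
    (a v : ι → ℝ) :
    |f v - f a - fderiv ℝ f a (v - a)| ≤
      1 / 2 * ∑ m, ∑ n, Q m n * (|(v - a) m| * |(v - a) n|) := by
  have hdf : Differentiable ℝ f := hf.differentiable (by norm_num)
  have hd2f : Differentiable ℝ (fderiv ℝ f) :=
    (hf.fderiv_right (m := 1) (by norm_num)).differentiable one_ne_zero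
  set w := v - a
  have hline : ∀ t : ℝ, HasDerivAt (fun s : ℝ => a + s • w) w t := fun t =>
    ((hasDerivAt_id t).smul_const w).const_add a |>.congr_deriv (by simp)
  have key := abs_sub_sub_mul_deriv_le_of_abs_deriv2_le (a := 0) (b := 1) zero_le_one
    (g := fun s => f (a + s • w)) (g' := fun s => fderiv ℝ f (a + s • w) w)
    (g'' := fun s => fderiv ℝ (fderiv ℝ f) (a + s • w) w w)
    (fun t _ => (hdf _).hasFDerivAt.comp_hasDerivAt t (hline t))
    (fun t _ => ((hd2f _).hasFDerivAt.comp_hasDerivAt t (hline t)).clm_apply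
      (hasDerivAt_const t w) |>.congr_deriv (by simp))
    (fun t _ => abs_apply_apply_le_sum_mul_abs _ (hQ _) w w)
  simp only [zero_smul, add_zero, one_smul, sub_zero, one_mul, one_pow, w, add_sub_cancel] at key
  linarith

lemma le_maxDiag {d : ℕ} (A : Matrix (Fin d) (Fin d) ℝ) (m : Fin d) : A m m ≤ maxDiag A :=
  le_ciSup (f := fun i => A i i) (Set.finite_range _).bddAbove m

lemma smul_sum_of_mul_self_apply_self {ι κ : Type*} [Fintype ι] (c : ℝ) (x : ι → κ → ℝ) (m : κ) :
    (c • ∑ i, Matrix.of fun m n => x i m * x i n) m m = c * ∑ i, x i m ^ 2 := by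
  simp [Matrix.sum_apply, sq]

lemma maxDiag_smul_sum_of_mul_self_nonneg {d : ℕ} {ι : Type*} [Fintype ι] {c : ℝ} (hc : 0 ≤ c)
    (x : ι → Fin d → ℝ) : 0 ≤ maxDiag (c • ∑ i, Matrix.of fun m n => x i m * x i n) :=
  Real.iSup_nonneg fun m => by rw [smul_sum_of_mul_self_apply_self]; positivity

lemma sum_abs_mul_abs_le_of_sum_sq_le {ι : Type*} (s : Finset ι) {x y : ι → ℝ} {K : ℝ}
    (hx : ∑ i ∈ s, x i ^ 2 ≤ K) (hy : ∑ i ∈ s, y i ^ 2 ≤ K) :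
    ∑ i ∈ s, |x i| * |y i| ≤ K := by
  have amgm : ∀ i ∈ s, 2 * (|x i| * |y i|) ≤ x i ^ 2 + y i ^ 2 := fun i _ => by
    simpa [mul_assoc, sq_abs] using two_mul_le_add_sq |x i| |y i|
  have := sum_le_sum amgm
  rw [← mul_sum, sum_add_distrib] at this
  linarith

lemma sum_sum_sum_mul_abs_mul_abs_le {ι κ : Type*} [Fintype ι] [Fintype κ] (Q : Matrix κ κ ℝ)
    (x : ι → κ → ℝ) {K : ℝ} (hK : ∀ m n, ∑ i, |x i m| * |x i n| ≤ K) :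
    ∑ i, ∑ m, ∑ n, Q m n * (|x i m| * |x i n|) ≤ (∑ m, ∑ n, |Q m n|) * K := calc
  _ = ∑ m, ∑ n, Q m n * ∑ i, |x i m| * |x i n| := by
    rw [sum_comm]
    refine sum_congr rfl fun m _ => ?_
    rw [sum_comm]
    simp only [mul_sum]
  _ ≤ ∑ m, ∑ n, |Q m n| * K := by
    refine sum_le_sum fun m _ => sum_le_sum fun n _ => ?_
    exact mul_le_mul (le_abs_self _) (hK m n) (by positivity) (abs_nonneg _)
  _ = (∑ m, ∑ n, |Q m n|) * K := by simp only [sum_mul]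

lemma sum_sub_mean_eq_zero {E : Type*} [AddCommGroup E] [Module ℝ E] {J : ℕ} (hJ : 0 < J)
    (u : Fin J → E) {ubar : E} (hubar : ubar = (J : ℝ)⁻¹ • ∑ i, u i) :
    ∑ i, (u i - ubar) = 0 := by
  have hJ' : (J : ℝ) ≠ 0 := by positivity
  rw [sum_sub_distrib, sum_const, card_univ, Fintype.card_fin, ← Nat.cast_smul_eq_nsmul ℝ,
    hubar, smul_smul, mul_inv_cancel₀ hJ', one_smul, sub_self]

lemma mean_sub_apply_mean_eq {E F : Type*} [AddCommGroup E] [Module ℝ E] [FunLike F E ℝ]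
    [AddMonoidHomClass F E ℝ] {J : ℕ} (hJ : 0 < J) (G : E → ℝ) (L : F) (u : Fin J → E)
    {ubar : E} (hubar : ubar = (J : ℝ)⁻¹ • ∑ i, u i) :
    (J : ℝ)⁻¹ * ∑ i, G (u i) - G ubar =
      (J : ℝ)⁻¹ * ∑ i, (G (u i) - G ubar - L (u i - ubar)) := by
  have hL : ∑ i, L (u i - ubar) = 0 := by rw [← map_sum, sum_sub_mean_eq_zero hJ u hubar, map_zero]
  have hJ' : (J : ℝ) ≠ 0 := by positivity
  rw [sum_sub_distrib, hL, sub_zero, sum_sub_distrib, sum_const, card_univ, Fintype.card_fin,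
    nsmul_eq_mul, mul_sub, inv_mul_cancel_left₀ hJ']

lemma sum_sq_sub_mean_eq {d J : ℕ} (hJ : 0 < J) (u : Fin J → Fin d → ℝ) {ubar : Fin d → ℝ}
    (hubar : ubar = (J : ℝ)⁻¹ • ∑ i, u i) {C : Matrix (Fin d) (Fin d) ℝ}
    (hC : C = ((J : ℝ) - 1)⁻¹ • ∑ i, Matrix.of fun m n => (u i m - ubar m) * (u i n - ubar n))
    (m : Fin d) :
    ∑ i, (u i m - ubar m) ^ 2 = ((J : ℝ) - 1) * C m m := by
  rw [hC, smul_sum_of_mul_self_apply_self (x := fun i m => u i m - ubar m)]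
  obtain rfl | hJ2 := (Nat.one_le_iff_ne_zero.2 hJ.ne').eq_or_lt
  -- for `J = 1` the factor `(J - 1)⁻¹` is the junk value `0⁻¹ = 0`, but all deviations vanish
  · simp [hubar]
  · have : (J : ℝ) - 1 ≠ 0 := sub_ne_zero.2 (by exact_mod_cast hJ2.ne')
    field_simp

lemma sum_abs_mul_abs_sub_mean_le {d J : ℕ} (hJ : 0 < J) (u : Fin J → Fin d → ℝ)
    {ubar : Fin d → ℝ} (hubar : ubar = (J : ℝ)⁻¹ • ∑ i, u i) {C : Matrix (Fin d) (Fin d) ℝ}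
    (hC : C = ((J : ℝ) - 1)⁻¹ • ∑ i, Matrix.of fun m n => (u i m - ubar m) * (u i n - ubar n))
    (m n : Fin d) :
    ∑ i, |(u i - ubar) m| * |(u i - ubar) n| ≤ ((J : ℝ) - 1) * maxDiag C := by
  have hJ1 : (0 : ℝ) ≤ J - 1 := sub_nonneg.2 (Nat.one_le_cast.2 hJ)
  have hsq : ∀ k, ∑ i, (u i - ubar) k ^ 2 ≤ ((J : ℝ) - 1) * maxDiag C := fun k =>
    (sum_sq_sub_mean_eq hJ u hubar hC k).trans_le (mul_le_mul_of_nonneg_left (le_maxDiag C k) hJ1)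
  exact sum_abs_mul_abs_le_of_sum_sq_le _ (hsq m) (hsq n)

lemma abs_mean_sub_apply_mean_le {ι : Type*} [Fintype ι] [DecidableEq ι] {J : ℕ} (hJ : 0 < J)
    {f : (ι → ℝ) → ℝ} (hf : ContDiff ℝ 2 f) {Q : Matrix ι ι ℝ}
    (hQ : ∀ v m n, |fderiv ℝ (fderiv ℝ f) v (Pi.single m 1) (Pi.single n 1)| ≤ Q m n)
    (u : Fin J → ι → ℝ) {ubar : ι → ℝ} (hubar : ubar = (J : ℝ)⁻¹ • ∑ i, u i) {K : ℝ}
    (hK : ∀ m n, ∑ i, |(u i - ubar) m| * |(u i - ubar) n| ≤ K) :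
    |(J : ℝ)⁻¹ * ∑ i, f (u i) - f ubar| ≤ (J : ℝ)⁻¹ * (1 / 2 * ((∑ m, ∑ n, |Q m n|) * K)) := by
  rw [mean_sub_apply_mean_eq hJ f (fderiv ℝ f ubar) u hubar, abs_mul,
    abs_of_nonneg (by positivity)]
  gcongr
  calc _ ≤ ∑ i, |f (u i) - f ubar - fderiv ℝ f ubar (u i - ubar)| := abs_sum_le_sum_abs _ _
    _ ≤ ∑ i, 1 / 2 * ∑ m, ∑ n, Q m n * (|(u i - ubar) m| * |(u i - ubar) n|) :=
      sum_le_sum fun i _ => abs_sub_sub_fderiv_le_of_abs_fderiv2_le hf hQ ubar (u i)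
    _ ≤ 1 / 2 * ((∑ m, ∑ n, |Q m n|) * K) := by
      rw [← mul_sum]
      gcongr
      exact sum_sum_sum_mul_abs_mul_abs_le Q (fun i => u i - ubar) hK

/-- **Hessian-dominated ensemble consistency bound** (Lemma 5.8 of the paper).
If the Hessian of `G_j` is dominated entrywise by `Q^j` with `Σ_{m,n}|Q^j_{m,n}| ≤ L_G`,
then the ensemble mean of `G_j` deviates from `G_j` at the ensemble mean by at most
`((J-1)/(2J)) L_G ‖C^{uu}‖_max ≤ ½ L_G ‖C^{uu}‖_max`. -/
theorem hessian_dominated_consistency_bound {du J : ℕ} (hJ : 0 < J)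
    (Gj : (Fin du → ℝ) → ℝ) (hGj : ContDiff ℝ 2 Gj)
    (Q : Matrix (Fin du) (Fin du) ℝ)
    (hQ : ∀ (v : Fin du → ℝ) (m n : Fin du),
      |fderiv ℝ (fun w => fderiv ℝ Gj w (Pi.single n 1)) v (Pi.single m 1)| ≤ Q m n)
    (L_G : ℝ) (hLG : ∑ m, ∑ n, |Q m n| ≤ L_G)
    (u : Fin J → Fin du → ℝ)
    (ubar : Fin du → ℝ) (hubar : ubar = (J : ℝ)⁻¹ • ∑ i, u i)
    (Gbar : ℝ) (hGbar : Gbar = (J : ℝ)⁻¹ * ∑ i, Gj (u i))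
    (Cuu : Matrix (Fin du) (Fin du) ℝ)
    (hCuu : Cuu = ((J : ℝ) - 1)⁻¹ •
      ∑ i, Matrix.of fun m n => (u i m - ubar m) * (u i n - ubar n)) :
    |Gbar - Gj ubar| ≤ ((J : ℝ) - 1) / (2 * (J : ℝ)) * L_G * maxDiag Cuu ∧
    ((J : ℝ) - 1) / (2 * (J : ℝ)) * L_G * maxDiag Cuu ≤ 1 / 2 * L_G * maxDiag Cuu := by
  have hJ1 : (0 : ℝ) ≤ J - 1 := sub_nonneg.2 (Nat.one_le_cast.2 hJ)
  have hLG0 : 0 ≤ L_G := (sum_nonneg fun m _ => sum_nonneg fun n _ => abs_nonneg (Q m n)).trans hLG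
  have hC0 : 0 ≤ maxDiag Cuu := by
    rw [hCuu]
    exact maxDiag_smul_sum_of_mul_self_nonneg (inv_nonneg.2 hJ1) _
  have hd2 : Differentiable ℝ (fderiv ℝ Gj) :=
    (hGj.fderiv_right (m := 1) le_rfl).differentiable one_ne_zero
  have hessian : ∀ v m n, |fderiv ℝ (fderiv ℝ Gj) v (Pi.single m 1) (Pi.single n 1)| ≤ Q m n :=
    fun v m n => fderiv_fun_fderiv_apply (hd2 v) _ _ ▸ hQ v m n
  have hgap := abs_mean_sub_apply_mean_le hJ hGj hessian u hubar
    (sum_abs_mul_abs_sub_mean_le hJ u hubar hCuu)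
  constructor
  · calc |Gbar - Gj ubar|
        ≤ (J : ℝ)⁻¹ * (1 / 2 * ((∑ m, ∑ n, |Q m n|) * ((J - 1) * maxDiag Cuu))) := hGbar ▸ hgap
      _ ≤ (J : ℝ)⁻¹ * (1 / 2 * (L_G * ((J - 1) * maxDiag Cuu))) := by
        have := mul_nonneg hJ1 hC0
        gcongr
      _ = ((J : ℝ) - 1) / (2 * (J : ℝ)) * L_G * maxDiag Cuu := by field_simp
  · gcongr ?_ * _ * _
    rw [div_le_div_iff₀ (by positivity) two_pos]
    linarith
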